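/- arXiv:2004.06001 — 2 statements merged into one kernel-verified Lean document; each statement's English description precedes it below -/
import Mathlib

section
/- Let η > 0. Then ∫_ℝ tanh(x)·N(x; η, η) dx = ∫_ℝ tanh²(x)·N(x; η, η) dx, where N(x; μ, v) = (1/√(2πv))·exp(−(x−μ)²/(2v)) is the real Gaussian density. -/
/-!
Since `N(-x; η, η) = e^{-2x} N(x; η, η)` and `tanh x · (1 + e^{-2x}) = 1 - e^{-2x}`, the functions
`tanh · N` and `tanh² · N` have the same even part `x ↦ f x + f (-x)`; the integral of an
integrable function over `ℝ` only depends on its even part.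
-/

/-- The real Gaussian density with mean `μ` and variance `v`. -/
noncomputable def gaussPdf (μ v x : ℝ) : ℝ :=
  (Real.sqrt (2 * Real.pi * v))⁻¹ * Real.exp (-(x - μ) ^ 2 / (2 * v))

open MeasureTheory Real

theorem integral_eq_of_add_comp_neg_eq {G E : Type*} [MeasurableSpace G] [AddGroup G]
    [MeasurableNeg G] [NormedAddCommGroup E] [NormedSpace ℝ E] {μ : Measure G}
    [μ.IsNegInvariant] {g h : G → E} (hg : Integrable g μ) (hh : Integrable h μ)
    (hgh : ∀ x, g x + g (-x) = h x + h (-x)) :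
    ∫ x, g x ∂μ = ∫ x, h x ∂μ := by
  have two_smul_integral {f : G → E} (hf : Integrable f μ) :
      ∫ x, (f x + f (-x)) ∂μ = (2 : ℝ) • ∫ x, f x ∂μ := by
    rw [integral_add hf hf.comp_neg, integral_neg_eq_self f μ, two_smul]
  have := two_smul_integral hg
  rw [funext hgh, two_smul_integral hh] at this
  exact (smul_right_injective E two_ne_zero this).symm

theorem measurable_tanh : Measurable tanh := by
  rw [show tanh = fun x => sinh x / cosh x from funext tanh_eq_sinh_div_cosh]
  exact measurable_sinh.div measurable_cosh

theorem tanh_mul_one_add_exp_neg_two_mul (x : ℝ) :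
    tanh x * (1 + exp (-(2 * x))) = 1 - exp (-(2 * x)) := by
  have hexp : exp (-(2 * x)) = exp (-x) ^ 2 := by rw [← exp_nat_mul]; ring_nf
  have hpos : exp x + exp (-x) ≠ 0 := by positivity
  rw [tanh_eq, hexp, exp_neg]
  field_simp

theorem integral_tanh_mul_eq_integral_tanh_sq_mul {f : ℝ → ℝ} (hf : Integrable f)
    (hf_neg : ∀ x, f (-x) = exp (-(2 * x)) * f x) :
    ∫ x, tanh x * f x = ∫ x, tanh x ^ 2 * f x := by
  have hbound (x : ℝ) : ‖tanh x‖ ≤ 1 := (abs_tanh_lt_one x).le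
  have hsq_bound (x : ℝ) : ‖tanh x ^ 2‖ ≤ 1 := by
    rw [norm_pow]; exact pow_le_one₀ (norm_nonneg _) (hbound x)
  refine integral_eq_of_add_comp_neg_eq
    (hf.bdd_mul measurable_tanh.aestronglyMeasurable (.of_forall hbound))
    (hf.bdd_mul (measurable_tanh.pow_const 2).aestronglyMeasurable (.of_forall hsq_bound))
    fun x => ?_
  rw [hf_neg, tanh_neg]
  linear_combination (-(tanh x * f x)) * tanh_mul_one_add_exp_neg_two_mul x

theorem gaussPdf_eq_gaussianPDFReal (μ : ℝ) {v : ℝ} (hv : 0 ≤ v) :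
    gaussPdf μ v = ProbabilityTheory.gaussianPDFReal μ v.toNNReal := by
  ext x
  rw [ProbabilityTheory.gaussianPDFReal, Real.coe_toNNReal v hv, gaussPdf]

theorem integrable_gaussPdf (μ : ℝ) {v : ℝ} (hv : 0 ≤ v) : Integrable (gaussPdf μ v) := by
  rw [gaussPdf_eq_gaussianPDFReal μ hv]
  exact ProbabilityTheory.integrable_gaussianPDFReal μ _

theorem gaussPdf_neg (μ : ℝ) {v : ℝ} (hv : v ≠ 0) (x : ℝ) :
    gaussPdf μ v (-x) = exp (-(2 * μ * x / v)) * gaussPdf μ v x := by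
  rw [gaussPdf, gaussPdf, mul_left_comm, ← exp_add]
  congr 2
  field_simp
  ring

/-- Gaussian–tanh moment identity:
`∫ tanh(x)·N(x; η, η) dx = ∫ tanh²(x)·N(x; η, η) dx`. -/
theorem tanh_gauss_moment_identity (η : ℝ) (hη : 0 < η) :
    ∫ x : ℝ, Real.tanh x * gaussPdf η η x
      = ∫ x : ℝ, Real.tanh x ^ 2 * gaussPdf η η x := by
  refine integral_tanh_mul_eq_integral_tanh_sq_mul (integrable_gaussPdf η hη.le) fun x => ?_
  rw [gaussPdf_neg η hη.ne', mul_right_comm, mul_div_cancel_right₀ _ hη.ne']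
end

section
/- The function η ↦ mmse_u(η) = ∫_ℝ (1 − tanh x)²·N(x; η, η) dx is monotonically decreasing on (0, ∞): for all 0 < η₁ < η₂, mmse_u(η₂) ≤ mmse_u(η₁). -/
/-- The MMSE function of the uncoded scalar BPSK denoiser. -/
noncomputable def mmseU (η : ℝ) : ℝ := ∫ x : ℝ, (1 - Real.tanh x) ^ 2 * gaussPdf η η x

/-!
`mmseU η` is the mean squared error of the posterior mean `tanh x` of `X = ±1`, where
`x ~ N(η X, η)` is the scaled observation; by symmetry we may take `X = 1`, i.e. `x ~ N(η, η)`.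
For `η₁ < η₂`, an observation at precision `η₁` is a degraded observation at precision `η₂`:
if `x ~ N(η₂, η₂)` then `(η₁ / η₂) x + N(0, η₁ (η₂ - η₁) / η₂) ~ N(η₁, η₁)`. So `mmseU η₁` is the
risk of an estimator that sees `x` only through an extra noisy channel. Averaging over the
posterior of `X` given `x`, which is legitimate because `(1 - tanh x) p(x) = (1 + tanh x) p(-x)`
for the density `p` of `N(η, η)`, compares the two risks pointwise in `x`, and there the posterior
mean `tanh x` wins.
-/

open MeasureTheory ProbabilityTheory Real
open scoped NNReal

@[fun_prop]
theorem Real.continuous_tanh : Continuous tanh := by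
  simp_rw [funext tanh_eq_sinh_div_cosh]
  exact continuous_sinh.div continuous_cosh fun x => (cosh_pos x).ne'

lemma norm_one_sub_tanh_sq_le (y : ℝ) : ‖(1 - tanh y) ^ 2‖ ≤ 4 := by
  rw [norm_pow, norm_eq_abs, sq_abs]
  nlinarith [neg_one_lt_tanh y, tanh_lt_one y]

lemma integrable_comp_tanh {μ : Measure ℝ} [IsFiniteMeasure μ] {g : ℝ → ℝ} (hg : Continuous g) :
    Integrable (fun y => g (tanh y)) μ := by
  obtain ⟨C, hC⟩ := (isCompact_Icc : IsCompact (Set.Icc (-1 : ℝ) 1)).exists_bound_of_continuousOn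
    hg.continuousOn
  exact .of_bound (by fun_prop) C <| ae_of_all _ fun y =>
    hC _ ⟨(neg_one_lt_tanh y).le, (tanh_lt_one y).le⟩

lemma MeasureTheory.Integrable.one_add_tanh_mul {μ : Measure ℝ} {Φ : ℝ → ℝ}
    (hΦ : Integrable Φ μ) : Integrable (fun x => (1 + tanh x) * Φ x) μ :=
  hΦ.bdd_mul (c := 2) (by fun_prop) <| ae_of_all _ fun x => by
    rw [norm_eq_abs, abs_le]; constructor <;> linarith [neg_one_lt_tanh x, tanh_lt_one x]

lemma MeasureTheory.Integrable.one_sub_tanh_mul {μ : Measure ℝ} {Φ : ℝ → ℝ}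
    (hΦ : Integrable Φ μ) : Integrable (fun x => (1 - tanh x) * Φ x) μ :=
  hΦ.bdd_mul (c := 2) (by fun_prop) <| ae_of_all _ fun x => by
    rw [norm_eq_abs, abs_le]; constructor <;> linarith [neg_one_lt_tanh x, tanh_lt_one x]

lemma one_sub_tanh_mul_gaussianPDFReal (η : ℝ≥0) (x : ℝ) :
    (1 - tanh x) * gaussianPDFReal η η x = (1 + tanh x) * gaussianPDFReal η η (-x) := by
  rcases eq_or_ne η 0 with rfl | hη
  · simp [gaussianPDFReal]
  simp only [tanh_eq, gaussianPDFReal_def]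
  set E₁ := exp (-(x - η) ^ 2 / (2 * η))
  set E₂ := exp (-(-x - η) ^ 2 / (2 * η))
  have key : exp (-x) * E₁ = exp x * E₂ := by
    rw [← exp_add, ← exp_add]
    congr 1
    field_simp
    ring
  clear_value E₁ E₂
  have hpos : 0 < exp x + exp (-x) := by positivity
  field_simp
  linear_combination 2 * key

lemma integral_one_sub_tanh_mul_comp_neg (η : ℝ≥0) (Φ : ℝ → ℝ) :
    ∫ x, (1 - tanh x) * Φ (-x) ∂gaussianReal η η = ∫ x, (1 - tanh x) * Φ x ∂gaussianReal η η := by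
  rcases eq_or_ne η 0 with rfl | hη
  · simp [gaussianReal_zero_var]
  simp only [integral_gaussianReal_eq_integral_smul hη, smul_eq_mul]
  rw [← integral_neg_eq_self]
  congr 1 with x
  rw [neg_neg, tanh_neg, sub_neg_eq_add]
  linear_combination Φ x * (one_sub_tanh_mul_gaussianPDFReal η x).symm

lemma integral_gaussianReal_neg_mean (m : ℝ) (v : ℝ≥0) (f : ℝ → ℝ) :
    ∫ y, f y ∂gaussianReal (-m) v = ∫ y, f (-y) ∂gaussianReal m v := by
  rw [← gaussianReal_map_neg]
  exact (MeasurableEquiv.neg ℝ).measurableEmbedding.integral_map f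

lemma integral_gaussianReal_eq_integral_integral (m c : ℝ) (v w : ℝ≥0) {f : ℝ → ℝ}
    (hf : Integrable f (gaussianReal (c * m) (.mk (c ^ 2) (sq_nonneg c) * v + w))) :
    ∫ y, f y ∂gaussianReal (c * m) (.mk (c ^ 2) (sq_nonneg c) * v + w)
      = ∫ x, ∫ y, f y ∂gaussianReal (c * x) w ∂gaussianReal m v := by
  have hconv : gaussianReal (c * m) (.mk (c ^ 2) (sq_nonneg c) * v + w)
      = (gaussianReal m v).map (c * ·) ∗ gaussianReal 0 w := by
    rw [gaussianReal_map_const_mul, gaussianReal_conv_gaussianReal, add_zero]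
  have hshift (z : ℝ) : ∫ y, f (z + y) ∂gaussianReal 0 w = ∫ y, f y ∂gaussianReal z w := by
    rw [← (measurableEmbedding_addLeft z).integral_map, gaussianReal_map_const_add, zero_add]
  rw [hconv] at hf ⊢
  have hprod := (integrable_map_measure hf.1 (by fun_prop)).mp hf
  rw [integral_conv hf, integral_map (by fun_prop) (f := fun z => ∫ y, f (z + y) ∂gaussianReal 0 w)
    hprod.integral_prod_left.1]
  simp_rw [hshift]

lemma integrable_integral_gaussianReal {μ : Measure ℝ} [IsFiniteMeasure μ] {m : ℝ → ℝ}
    (hm : Measurable m) (w : ℝ≥0) {f : ℝ → ℝ} (hf : StronglyMeasurable f) {C : ℝ}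
    (hC : ∀ y, ‖f y‖ ≤ C) :
    Integrable (fun x => ∫ y, f y ∂gaussianReal (m x) w) μ := by
  let κ : Kernel ℝ ℝ := ⟨fun x => gaussianReal (m x) w, by fun_prop⟩
  refine .of_bound (hf.integral_kernel (κ := κ)).aestronglyMeasurable C (ae_of_all _ fun x => ?_)
  simpa using norm_integral_le_of_norm_le_const (μ := gaussianReal (m x) w) (ae_of_all _ hC)

/-- Twice the posterior mean of `Φ (X * x)`, where `X = ±1` has posterior probabilities
`(1 ± tanh x) / 2` given the observation `x ~ N(η X, η)`. -/
noncomputable def posteriorAverage (Φ : ℝ → ℝ) (x : ℝ) : ℝ :=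
  (1 + tanh x) * Φ x + (1 - tanh x) * Φ (-x)

lemma integrable_posteriorAverage {μ : Measure ℝ} {Φ : ℝ → ℝ} (hΦ : Integrable Φ μ)
    (hΦ' : Integrable (fun x => Φ (-x)) μ) : Integrable (posteriorAverage Φ) μ :=
  hΦ.one_add_tanh_mul.add hΦ'.one_sub_tanh_mul

lemma integral_posteriorAverage (η : ℝ≥0) {Φ : ℝ → ℝ} (hΦ : Integrable Φ (gaussianReal η η))
    (hΦ' : Integrable (fun x => Φ (-x)) (gaussianReal η η)) :
    ∫ x, posteriorAverage Φ x ∂gaussianReal η η = 2 * ∫ x, Φ x ∂gaussianReal η η := by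
  simp only [posteriorAverage]
  rw [integral_add hΦ.one_add_tanh_mul hΦ'.one_sub_tanh_mul, integral_one_sub_tanh_mul_comp_neg,
    ← integral_add hΦ.one_add_tanh_mul hΦ.one_sub_tanh_mul, ← integral_const_mul]
  congr 1 with x
  ring

/-- Twice the mean squared error of the estimate `s` of `X = ±1` when `P(X = ±1) = (1 ± t) / 2`. -/
def binaryRisk (t s : ℝ) : ℝ := (1 + t) * (1 - s) ^ 2 + (1 - t) * (1 + s) ^ 2

lemma binaryRisk_self_le (t s : ℝ) : binaryRisk t t ≤ binaryRisk t s := by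
  unfold binaryRisk
  nlinarith [sq_nonneg (s - t)]

lemma binaryRisk_le_integral {α : Type*} [MeasurableSpace α] (ν : Measure α)
    [IsProbabilityMeasure ν] (t : ℝ) {T : α → ℝ}
    (hT : Integrable (fun y => binaryRisk t (T y)) ν) :
    binaryRisk t t ≤ ∫ y, binaryRisk t (T y) ∂ν :=
  calc binaryRisk t t = ∫ _, binaryRisk t t ∂ν := by simp
    _ ≤ ∫ y, binaryRisk t (T y) ∂ν :=
      integral_mono (integrable_const _) hT fun y => binaryRisk_self_le t (T y)

lemma posteriorAverage_one_sub_tanh_sq (x : ℝ) :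
    posteriorAverage (fun x => (1 - tanh x) ^ 2) x = binaryRisk (tanh x) (tanh x) := by
  simp only [posteriorAverage, binaryRisk, tanh_neg]
  ring

lemma posteriorAverage_integral_gaussianReal (c : ℝ) (w : ℝ≥0) (x : ℝ) :
    posteriorAverage (fun x => ∫ y, (1 - tanh y) ^ 2 ∂gaussianReal (c * x) w) x
      = ∫ y, binaryRisk (tanh x) (tanh y) ∂gaussianReal (c * x) w := by
  simp only [posteriorAverage, mul_neg, integral_gaussianReal_neg_mean, tanh_neg, sub_neg_eq_add]
  rw [← integral_const_mul, ← integral_const_mul,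
    ← integral_add (integrable_comp_tanh (g := fun s => (1 + tanh x) * (1 - s) ^ 2) (by fun_prop))
      (integrable_comp_tanh (g := fun s => (1 - tanh x) * (1 + s) ^ 2) (by fun_prop))]
  rfl

lemma mmseU_eq_integral_gaussianReal {η : ℝ≥0} (hη : η ≠ 0) :
    mmseU η = ∫ x, (1 - tanh x) ^ 2 ∂gaussianReal η η := by
  rw [integral_gaussianReal_eq_integral_smul hη]
  simp only [smul_eq_mul, mul_comm (gaussianPDFReal _ _ _)]
  rfl

lemma mmseU_eq_integral_integral_gaussianReal {η₁ η₂ : ℝ≥0} (h₁ : 0 < η₁) (h₁₂ : η₁ < η₂) :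
    mmseU η₁ = ∫ x, ∫ y, (1 - tanh y) ^ 2 ∂gaussianReal (η₁ / η₂ * x) (η₁ * (η₂ - η₁) / η₂)
      ∂gaussianReal η₂ η₂ := by
  have h₂ : (η₂ : ℝ) ≠ 0 := by exact_mod_cast (h₁.trans h₁₂).ne'
  have hdegrade : gaussianReal η₁ η₁ = gaussianReal (η₁ / η₂ * η₂)
      (.mk ((η₁ / η₂ : ℝ) ^ 2) (sq_nonneg _) * η₂ + η₁ * (η₂ - η₁) / η₂) := by
    congr 1
    · field_simp
    · ext
      push_cast [NNReal.coe_sub h₁₂.le]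
      field_simp
      ring
  rw [mmseU_eq_integral_gaussianReal h₁.ne', hdegrade, integral_gaussianReal_eq_integral_integral]
  exact integrable_comp_tanh (g := fun s => (1 - s) ^ 2) (by fun_prop)

/-- `mmse_u` is monotonically decreasing on `(0, ∞)`: for all
`0 < η₁ < η₂`, `mmse_u(η₂) ≤ mmse_u(η₁)`. -/
theorem mmseU_antitone (η₁ η₂ : ℝ) (h₁ : 0 < η₁) (h₁₂ : η₁ < η₂) :
    mmseU η₂ ≤ mmseU η₁ := by
  lift η₁ to ℝ≥0 using h₁.le
  lift η₂ to ℝ≥0 using (h₁.trans h₁₂).le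
  norm_cast at h₁ h₁₂
  set P := gaussianReal η₂ η₂
  set K := fun x : ℝ => ∫ y, (1 - tanh y) ^ 2 ∂gaussianReal (η₁ / η₂ * x) (η₁ * (η₂ - η₁) / η₂)
  have hg : Integrable (fun x => (1 - tanh x) ^ 2) P :=
    integrable_comp_tanh (g := fun s => (1 - s) ^ 2) (by fun_prop)
  have hg' : Integrable (fun x => (1 - tanh (-x)) ^ 2) P := by
    simpa only [tanh_neg] using integrable_comp_tanh (g := fun s => (1 - -s) ^ 2) (by fun_prop)
  have hK : Integrable K P :=
    integrable_integral_gaussianReal (by fun_prop) _ (by fun_prop) norm_one_sub_tanh_sq_le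
  have hK' : Integrable (fun x => K (-x)) P :=
    integrable_integral_gaussianReal (by fun_prop) _ (by fun_prop) norm_one_sub_tanh_sq_le
  suffices 2 * mmseU η₂ ≤ 2 * mmseU η₁ by linarith
  rw [mmseU_eq_integral_gaussianReal (h₁.trans h₁₂).ne',
    mmseU_eq_integral_integral_gaussianReal h₁ h₁₂,
    ← integral_posteriorAverage _ hg hg', ← integral_posteriorAverage _ hK hK']
  refine integral_mono (integrable_posteriorAverage hg hg') (integrable_posteriorAverage hK hK')
    fun x => ?_
  rw [posteriorAverage_one_sub_tanh_sq, posteriorAverage_integral_gaussianReal]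
  exact binaryRisk_le_integral _ _
    (integrable_comp_tanh (g := binaryRisk (tanh x)) (by unfold binaryRisk; fun_prop))
end
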